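/- Conformation 1, conformation 2, the reversal of conformation 1, and the reversal of conformation 2 are pairwise inequivalent: no lattice rotation and translation maps any one of these four length-5 conformations onto another. In particular, the four directed types →1, ←1, →2, ←2 of windows are mutually exclusive. -/
import Mathlib


/-- Points of the cubic lattice `ℤ³`. -/
abbrev P3 : Type := Fin 3 → ℤ

def e1 : P3 := ![1, 0, 0]
def e2 : P3 := ![0, 1, 0]
def e3 : P3 := ![0, 0, 1]

/-- Squared Euclidean norm of an integer vector; it equals `1` iff the
Euclidean norm equals `1`. -/
def sqNorm (v : P3) : ℤ := ∑ k, (v k) ^ 2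

/-- A conformation of length `N`: an injective map on `{1, …, N}` whose
consecutive steps have Euclidean length one. -/
def IsConformation (N : ℕ) (Γ : ℕ → P3) : Prop :=
  Set.InjOn Γ (Set.Icc 1 N) ∧ ∀ i, 1 ≤ i → i < N → sqNorm (Γ (i + 1) - Γ i) = 1

/-- A lattice rotation: an orthogonal integer matrix of determinant one
(equivalently, a linear isometry of `ℝ³` mapping `ℤ³` onto `ℤ³` with
determinant one). -/
def IsLatticeRotation (R : Matrix (Fin 3) (Fin 3) ℤ) : Prop :=
  R.transpose * R = 1 ∧ R.det = 1

/-- Equivalence of length-5 conformations: `Δ' k = R (Δ k) + t` for a lattice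
rotation `R` and translation `t ∈ ℤ³`. -/
def Equiv5 (Δ Δ' : Fin 5 → P3) : Prop :=
  ∃ (R : Matrix (Fin 3) (Fin 3) ℤ) (t : P3),
    IsLatticeRotation R ∧ ∀ k, Δ' k = R.mulVec (Δ k) + t

/-- Reversal of a length-5 conformation (`k ↦ Δ (6 - k)` in 1-based indexing). -/
def rev5 (Δ : Fin 5 → P3) : Fin 5 → P3 := fun k => Δ k.rev

/-- Conformation 1: vertices (0,0,0), (1,0,0), (1,1,0), (0,1,0), (0,1,1). -/
def conf1 : Fin 5 → P3 := ![![0, 0, 0], ![1, 0, 0], ![1, 1, 0], ![0, 1, 0], ![0, 1, 1]]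

/-- Conformation 2: vertices (0,0,0), (0,1,0), (−1,1,0), (−1,1,1), (−1,0,1). -/
def conf2 : Fin 5 → P3 := ![![0, 0, 0], ![0, 1, 0], ![-1, 1, 0], ![-1, 1, 1], ![-1, 0, 1]]

/-- The `i`-th window of `Γ`: the 5-tuple `(Γ(i-2), …, Γ(i+2))`. -/
def window (Γ : ℕ → P3) (i : ℕ) : Fin 5 → P3 := fun k => Γ (i - 2 + (k : ℕ))

/-- `Φ(Δ) = 1`: the 5-tuple `Δ` or its reversal is equivalent to
conformation 1 or to conformation 2. -/
def WindowGood (Δ : Fin 5 → P3) : Prop :=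
  Equiv5 Δ conf1 ∨ Equiv5 (rev5 Δ) conf1 ∨ Equiv5 Δ conf2 ∨ Equiv5 (rev5 Δ) conf2

open Classical in
/-- The function `Φ` on length-5 conformations. -/
noncomputable def Phi (Δ : Fin 5 → P3) : ℤ := if WindowGood Δ then 1 else 0

/-- The energy `E₅(Γ) = −Σ_{i=3}^{N−2} Φ(Γ_i)`. -/
noncomputable def E5 (N : ℕ) (Γ : ℕ → P3) : ℤ :=
  -∑ i ∈ Finset.Icc 3 (N - 2), Phi (window Γ i)

/-- A minimal conformation: a conformation all of whose windows satisfy `Φ = 1`. -/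
def IsMinimal (N : ℕ) (Γ : ℕ → P3) : Prop :=
  IsConformation N Γ ∧ ∀ i, 3 ≤ i → i ≤ N - 2 → WindowGood (window Γ i)

/-- The walk starting at the origin (in 1-based indexing) whose steps
cyclically repeat the given list. -/
def cyclicWalk (steps : List P3) : ℕ → P3
  | 0 => 0
  | 1 => 0
  | n + 2 => cyclicWalk steps (n + 1) + steps.getD (n % steps.length) 0

/-- The 16-term step sequence of the lattice α-helix. -/
def alphaStepList : List P3 :=
  [e1, e2, -e1, e3, -e2, e1, e2, e3, -e1, -e2, e1, e3, e2, -e1, -e2, e3]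

/-- The 4-term step sequence of the lattice β-strand. -/
def betaStepList : List P3 := [e1, e2, -e1, e3]

/-- The lattice α-helix (`H(1) = 0`, steps cyclically repeating `alphaStepList`). -/
def alphaHelix : ℕ → P3 := cyclicWalk alphaStepList

/-- The lattice β-strand (`B(1) = 0`, steps cyclically repeating `betaStepList`). -/
def betaStrand : ℕ → P3 := cyclicWalk betaStepList

/-- The four directed types of windows. -/
inductive DType : Type
  | r1  -- →1
  | l1  -- ←1
  | r2  -- →2
  | l2  -- ←2
deriving DecidableEq

/-- A window `Δ` has directed type `→1` (resp. `→2`) if it is equivalent to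
conformation 1 (resp. 2), and `←1` (resp. `←2`) if its reversal is. -/
def HasType (Δ : Fin 5 → P3) : DType → Prop
  | DType.r1 => Equiv5 Δ conf1
  | DType.l1 => Equiv5 (rev5 Δ) conf1
  | DType.r2 => Equiv5 Δ conf2
  | DType.l2 => Equiv5 (rev5 Δ) conf2

/-- The six allowed ordered pairs of directed types of consecutive windows:
(→1,←1), (←1,→1), (→1,→2), (→2,←2), (←2,←1), (←2,→2). -/
def allowedPairs : List (DType × DType) :=
  [(DType.r1, DType.l1), (DType.l1, DType.r1), (DType.r1, DType.r2),
   (DType.r2, DType.l2), (DType.l2, DType.l1), (DType.l2, DType.r2)]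

/-- `w` is the type sequence of `Γ` (a conformation of length `N`):
`w` has length `N − 4` and its `j`-th letter is the directed type of the
window `Γ_{3+j}`, `j = 0, …, N−5`. -/
def HasTypeSeq (N : ℕ) (Γ : ℕ → P3) (w : List DType) : Prop :=
  w.length = N - 4 ∧ ∀ j (h : j < w.length), HasType (window Γ (3 + j)) (w.get ⟨j, h⟩)

/-- The word `α = →1→2←2←1`. -/
def wordAlpha : List DType := [DType.r1, DType.r2, DType.l2, DType.l1]

/-- The word `β = →1←1`. -/
def wordBeta : List DType := [DType.r1, DType.l1]

/-- `v` is a finite concatenation of copies of the words `α` and `β`. -/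
def IsABConcat (v : List DType) : Prop :=
  ∃ L : List (List DType), (∀ u ∈ L, u = wordAlpha ∨ u = wordBeta) ∧ v = L.flatten

/-- A word is admissible if it is a contiguous subword (factor) of some finite
concatenation of copies of `α` and `β`. -/
def Admissible (w : List DType) : Prop := ∃ v, IsABConcat v ∧ w <:+: v

/-- The two kinds of monomers. -/
inductive AB : Type
  | A
  | B
deriving DecidableEq

/-- The number of occurrences of the letter `c` in the `i`-th 5-tuple
`S(i−2), …, S(i+2)` of the sequence `S`. -/
def countLetter (c : AB) (S : ℕ → AB) (i : ℕ) : ℕ :=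
  ((Finset.Icc (i - 2) (i + 2)).filter fun k => S k = c).card

open Classical in
/-- `Φ₁(Δ) = 1` iff `Δ` or its reversal is equivalent to conformation 1. -/
noncomputable def Phi1 (Δ : Fin 5 → P3) : ℝ :=
  if Equiv5 Δ conf1 ∨ Equiv5 (rev5 Δ) conf1 then 1 else 0

open Classical in
/-- `Φ₂(Δ) = 1` iff `Δ` or its reversal is equivalent to conformation 2. -/
noncomputable def Phi2 (Δ : Fin 5 → P3) : ℝ :=
  if Equiv5 Δ conf2 ∨ Equiv5 (rev5 Δ) conf2 then 1 else 0

/-- The heteropolymer energy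
`E₅′(S,Γ) = −Σᵢ [#_B(Sᵢ)(Φ₁(Γᵢ) + ε Φ₂(Γᵢ)) + #_A(Sᵢ)(Φ₂(Γᵢ) + ε Φ₁(Γᵢ))]`. -/
noncomputable def E5' (ε : ℝ) (S : ℕ → AB) (N : ℕ) (Γ : ℕ → P3) : ℝ :=
  -∑ i ∈ Finset.Icc 3 (N - 2),
    ((countLetter AB.B S i : ℝ) * (Phi1 (window Γ i) + ε * Phi2 (window Γ i)) +
      (countLetter AB.A S i : ℝ) * (Phi2 (window Γ i) + ε * Phi1 (window Γ i)))

open Matrix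

lemma dot_rot {R : Matrix (Fin 3) (Fin 3) ℤ} (hR : R.transpose * R = 1) (u v : P3) :
    (R.mulVec u) ⬝ᵥ (R.mulVec v) = u ⬝ᵥ v := by
  rw [← Matrix.vecMul_transpose, ← Matrix.dotProduct_mulVec, Matrix.mulVec_mulVec, hR,
    Matrix.one_mulVec]

lemma equiv_diff {Δ Δ' : Fin 5 → P3} (h : Equiv5 Δ Δ') :
    ∃ R : Matrix (Fin 3) (Fin 3) ℤ, IsLatticeRotation R ∧
      ∀ a b, Δ' a - Δ' b = R.mulVec (Δ a - Δ b) := by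
  obtain ⟨R, t, hR, hk⟩ := h
  refine ⟨R, hR, fun a b => ?_⟩
  rw [hk a, hk b, Matrix.mulVec_sub]
  abel

lemma dot_inv {Δ Δ' : Fin 5 → P3} (h : Equiv5 Δ Δ') (a b c d : Fin 5) :
    (Δ' a - Δ' b) ⬝ᵥ (Δ' c - Δ' d) = (Δ a - Δ b) ⬝ᵥ (Δ c - Δ d) := by
  obtain ⟨R, hR, hd⟩ := equiv_diff h
  rw [hd, hd, dot_rot hR.1]

lemma rows_mul (R : Matrix (Fin 3) (Fin 3) ℤ) (u v w : P3) :
    (Matrix.of ![R.mulVec u, R.mulVec v, R.mulVec w]) = Matrix.of ![u, v, w] * R.transpose := by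
  ext i j
  fin_cases i <;>
    simp [Matrix.mul_apply, Matrix.mulVec, dotProduct, mul_comm]

lemma det_inv {Δ Δ' : Fin 5 → P3} (h : Equiv5 Δ Δ') (a b c d e f : Fin 5) :
    (Matrix.of ![Δ' a - Δ' b, Δ' c - Δ' d, Δ' e - Δ' f]).det =
      (Matrix.of ![Δ a - Δ b, Δ c - Δ d, Δ e - Δ f]).det := by
  obtain ⟨R, hR, hd⟩ := equiv_diff h
  rw [hd, hd, hd, rows_mul, Matrix.det_mul, Matrix.det_transpose, hR.2, mul_one]

/-- conformation 1, conformation 2, and their reversals are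
pairwise inequivalent: no lattice rotation and translation maps any one of
these four length-5 conformations onto another. In particular the four
directed types `→1, ←1, →2, ←2` are mutually exclusive. -/
theorem conf_pairwise_inequivalent :
    List.Pairwise (fun Δ Δ' => ¬Equiv5 Δ Δ' ∧ ¬Equiv5 Δ' Δ)
      [conf1, conf2, rev5 conf1, rev5 conf2] := by
  have h1 : ∀ Δ Δ' : Fin 5 → P3, Equiv5 Δ Δ' →
      (Δ' 3 - Δ' 2) ⬝ᵥ (Δ' 1 - Δ' 0) = (Δ 3 - Δ 2) ⬝ᵥ (Δ 1 - Δ 0) :=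
    fun _ _ h => dot_inv h 3 2 1 0
  have h2 : ∀ Δ Δ' : Fin 5 → P3, Equiv5 Δ Δ' →
      (Δ' 4 - Δ' 3) ⬝ᵥ (Δ' 1 - Δ' 0) = (Δ 4 - Δ 3) ⬝ᵥ (Δ 1 - Δ 0) :=
    fun _ _ h => dot_inv h 4 3 1 0
  have h3 : ∀ Δ Δ' : Fin 5 → P3, Equiv5 Δ Δ' →
      (Matrix.of ![Δ' 1 - Δ' 0, Δ' 2 - Δ' 1, Δ' 3 - Δ' 2]).det =
        (Matrix.of ![Δ 1 - Δ 0, Δ 2 - Δ 1, Δ 3 - Δ 2]).det :=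
    fun _ _ h => det_inv h 1 0 2 1 3 2
  refine List.Pairwise.cons ?_ (List.Pairwise.cons ?_ (List.Pairwise.cons ?_ ?_))
  · intro Δ' hΔ'
    simp only [List.mem_cons, List.mem_singleton, List.not_mem_nil, or_false] at hΔ'
    rcases hΔ' with rfl | rfl | rfl
    · exact ⟨fun h => by have := h1 _ _ h; revert this; decide,
        fun h => by have := h1 _ _ h; revert this; decide⟩
    · exact ⟨fun h => by have := h1 _ _ h; revert this; decide,
        fun h => by have := h1 _ _ h; revert this; decide⟩
    · exact ⟨fun h => by have := h1 _ _ h; revert this; decide,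
        fun h => by have := h1 _ _ h; revert this; decide⟩
  · intro Δ' hΔ'
    simp only [List.mem_cons, List.mem_singleton, List.not_mem_nil, or_false] at hΔ'
    rcases hΔ' with rfl | rfl
    · exact ⟨fun h => by have := h2 _ _ h; revert this; decide,
        fun h => by have := h2 _ _ h; revert this; decide⟩
    · exact ⟨fun h => by have := h3 _ _ h; revert this; decide,
        fun h => by have := h3 _ _ h; revert this; decide⟩
  · intro Δ' hΔ'
    simp only [List.mem_singleton] at hΔ'
    subst hΔ'
    exact ⟨fun h => by have := h2 _ _ h; revert this; decide,
      fun h => by have := h2 _ _ h; revert this; decide⟩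
  · exact List.pairwise_singleton _ _
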